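/- arXiv:math/9209213 — 2 statements merged into one kernel-verified Lean document; each statement's English description precedes it below -/
import Mathlib

section
/- (Carathéodory theorem for p-convex hulls) Let 0<p<1, A ⊆ R^n, and x ∈ p-conv(A) with x ≠ 0. Then there exist linearly independent vectors P_1,...,P_k ∈ A with k ≤ n such that x ∈ p-conv({P_1,...,P_k}). -/
open Finset

def PConvex {X : Type*} [AddCommGroup X] [Module ℝ X] (p : ℝ) (S : Set X) : Prop :=
  ∀ x ∈ S, ∀ y ∈ S, ∀ a b : ℝ, 0 ≤ a → 0 ≤ b → a ^ p + b ^ p = 1 → a • x + b • y ∈ S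

def pConvHull {X : Type*} [AddCommGroup X] [Module ℝ X] (p : ℝ) (A : Set X) : Set X :=
  ⋂₀ {S : Set X | PConvex p S ∧ A ⊆ S}

section aux
variable {X : Type*} [AddCommGroup X] [Module ℝ X] {p : ℝ} {A : Set X}

lemma pConvex_pConvHull : PConvex p (pConvHull p A) := by
  intro x hx y hy a b ha hb hab
  rw [pConvHull, Set.mem_sInter] at *
  intro S hS
  exact hS.1 x (hx S hS) y (hy S hS) a b ha hb hab

lemma subset_pConvHull : A ⊆ pConvHull p A := by
  intro x hx
  rw [pConvHull, Set.mem_sInter]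
  exact fun S hS => hS.2 hx

lemma smul_mem_pconvex {S : Set X} (hp0 : 0 < p) (hp1 : p < 1) (hS : PConvex p S)
    {y : X} (hy : y ∈ S) {t : ℝ} (ht0 : 0 < t) (ht1 : t ≤ 1) : t • y ∈ S := by
  set c : ℝ := (2 : ℝ) ^ (1 - 1/p) with hc
  have hpinv : 1 < 1/p := by rw [lt_div_iff₀ hp0]; linarith
  have hc0 : 0 < c := Real.rpow_pos_of_pos two_pos _
  have hc1 : c < 1 := Real.rpow_lt_one_of_one_lt_of_neg one_lt_two (by linarith)
  -- base case via IVT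
  have base : ∀ t : ℝ, c ≤ t → t ≤ 1 → ∀ z ∈ S, t • z ∈ S := by
    intro t htc ht1 z hz
    set A0 : ℝ := (2 : ℝ) ^ (-(1/p)) with hA0def
    have hA0pos : 0 < A0 := Real.rpow_pos_of_pos two_pos _
    have hA0p : A0 ^ p = 1/2 := by
      rw [hA0def, ← Real.rpow_mul (by norm_num : (0:ℝ) ≤ 2)]
      have : -(1/p) * p = -1 := by field_simp
      rw [this, Real.rpow_neg_one]
      norm_num
    set f : ℝ → ℝ := fun a => a + (1 - a ^ p) ^ (1/p) with hf
    have hcont : Continuous f := by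
      exact continuous_id.add ((Real.continuous_rpow_const (by positivity)).comp
        (continuous_const.sub (Real.continuous_rpow_const hp0.le)))
    have hf0 : f 0 = 1 := by
      simp [hf, Real.zero_rpow hp0.ne', Real.one_rpow]
    have hfA : f A0 = c := by
      have h12 : ((1:ℝ)/2) ^ (1/p) = A0 := by
        rw [hA0def, show ((1:ℝ)/2) = (2:ℝ) ^ (-1 : ℝ) by rw [Real.rpow_neg_one]; norm_num,
          ← Real.rpow_mul (by norm_num : (0:ℝ) ≤ 2)]
        norm_num
      have e1 : (1:ℝ) - A0 ^ p = 1/2 := by rw [hA0p]; norm_num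
      have : f A0 = A0 + A0 := by rw [hf]; simp only; rw [e1, h12]
      rw [this, hc, show (1 : ℝ) - 1/p = 1 + -(1/p) by ring,
        Real.rpow_add two_pos, Real.rpow_one, hA0def]
      ring
    have hivt : Set.Icc (f A0) (f 0) ⊆ f '' Set.Icc 0 A0 :=
      intermediate_value_Icc' hA0pos.le hcont.continuousOn
    obtain ⟨a, ⟨ha0, haA⟩, hfa⟩ := hivt (show t ∈ Set.Icc (f A0) (f 0) by
      rw [hfA, hf0]; exact ⟨htc, ht1⟩)
    have hap : a ^ p ≤ 1 := by
      have : a ^ p ≤ A0 ^ p := Real.rpow_le_rpow ha0 haA hp0.le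
      rw [hA0p] at this; linarith
    set b : ℝ := (1 - a ^ p) ^ (1/p) with hb
    have hb0 : 0 ≤ b := Real.rpow_nonneg (by linarith) _
    have hbp : b ^ p = 1 - a ^ p := by
      rw [hb, ← Real.rpow_mul (by linarith), one_div_mul_cancel hp0.ne', Real.rpow_one]
    have hmem := hS z hz z hz a b ha0 hb0 (by rw [hbp]; ring)
    have hab : a + b = t := hfa
    have : a • z + b • z = t • z := by rw [← add_smul, hab]
    rwa [this] at hmem
  have claim : ∀ k : ℕ, ∀ t : ℝ, c ^ k ≤ t → t ≤ 1 → t • y ∈ S := by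
    intro k
    induction k with
    | zero =>
      intro t h1 h2
      rw [pow_zero] at h1
      rw [le_antisymm h2 h1, one_smul]
      exact hy
    | succ k ih =>
      intro t h1 h2
      by_cases hct : c ≤ t
      · exact base t hct h2 y hy
      · push_neg at hct
        have h3 : c ^ k ≤ t / c := by
          rw [le_div_iff₀ hc0]
          calc c ^ k * c = c ^ (k+1) := (pow_succ c k).symm
            _ ≤ t := h1
        have h4 : t / c ≤ 1 := by rw [div_le_one hc0]; exact hct.le
        have := base c le_rfl hc1.le _ (ih (t/c) h3 h4)
        rwa [smul_smul, mul_comm, div_mul_cancel₀ _ hc0.ne'] at this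
  obtain ⟨k, hk⟩ := exists_pow_lt_of_lt_one ht0 hc1
  exact claim k t hk.le ht1


lemma rep_mem_pConvHull (hp0 : 0 < p) :
    ∀ (N : ℕ) (P : Fin N → X) (d : Fin N → ℝ), (∀ i, P i ∈ A) → (∀ i, 0 ≤ d i) →
      ∑ i, d i ^ p = 1 → ∑ i, d i • P i ∈ pConvHull p A := by
  intro N
  induction N with
  | zero => intro P d _ _ hsum; simp at hsum
  | succ N ih =>
    intro P d hP hd hsum
    rw [Fin.sum_univ_succ] at hsum ⊢
    set S := ∑ i : Fin N, d i.succ ^ p with hSdef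
    have hS0 : 0 ≤ S := sum_nonneg fun i _ => Real.rpow_nonneg (hd _) _
    rcases eq_or_lt_of_le hS0 with h0 | hpos
    · have hz : ∀ i : Fin N, d i.succ = 0 := by
        intro i
        have h := (sum_eq_zero_iff_of_nonneg
          (fun i _ => Real.rpow_nonneg (hd _) _)).1 h0.symm i (mem_univ i)
        by_contra hne
        have hdp : 0 < d i.succ := lt_of_le_of_ne (hd _) (Ne.symm hne)
        exact absurd h (ne_of_gt (Real.rpow_pos_of_pos hdp p))
      have hS0' : S = 0 := h0.symm
      have hd1 : d 0 ^ p = 1 := by rw [hS0'] at hsum; linarith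
      have hd0 : d 0 = 1 := by
        have : d 0 = (d 0 ^ p) ^ (1/p) := by
          rw [← Real.rpow_mul (hd 0), mul_one_div_cancel hp0.ne', Real.rpow_one]
        rw [this, hd1, Real.one_rpow]
      have : ∑ i : Fin N, d i.succ • P i.succ = 0 :=
        sum_eq_zero fun i _ => by rw [hz i, zero_smul]
      rw [this, hd0, one_smul, add_zero]
      exact subset_pConvHull (hP 0)
    · set u : ℝ := S ^ (1/p) with hudef
      have hu0 : 0 < u := Real.rpow_pos_of_pos hpos _
      have hup : u ^ p = S := by
        rw [hudef, ← Real.rpow_mul hS0, one_div_mul_cancel hp0.ne', Real.rpow_one]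
      have hmem := ih (fun i => P i.succ) (fun i => d i.succ / u)
        (fun i => hP _) (fun i => div_nonneg (hd _) hu0.le)
        (by
          have : ∀ i : Fin N, (d i.succ / u) ^ p = d i.succ ^ p / u ^ p := fun i =>
            Real.div_rpow (hd _) hu0.le p
          rw [sum_congr rfl fun i _ => this i, ← sum_div, hup, ← hSdef,
            div_self hpos.ne'])
      have hcomb := pConvex_pConvHull (p := p) (A := A) (P 0) (subset_pConvHull (hP 0))
        _ hmem (d 0) u (hd 0) hu0.le (by rw [hup]; exact hsum)
      have : u • ∑ i : Fin N, (d i.succ / u) • P i.succ = ∑ i : Fin N, d i.succ • P i.succ := by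
        rw [smul_sum]
        exact sum_congr rfl fun i _ => by
          rw [smul_smul, mul_comm, div_mul_cancel₀ _ hu0.ne']
      rwa [this] at hcomb

lemma exists_rep (hp0 : 0 < p) {x : X} (hx : x ∈ pConvHull p A) :
    ∃ (N : ℕ) (P : Fin N → X) (c : Fin N → ℝ), (∀ i, P i ∈ A) ∧ (∀ i, 0 ≤ c i) ∧
      ∑ i, c i ^ p = 1 ∧ ∑ i, c i • P i = x := by
  set C : Set X := {x | ∃ (N : ℕ) (P : Fin N → X) (c : Fin N → ℝ),
    (∀ i, P i ∈ A) ∧ (∀ i, 0 ≤ c i) ∧ ∑ i, c i ^ p = 1 ∧ ∑ i, c i • P i = x} with hC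
  have hAC : A ⊆ C := by
    intro y hy
    refine ⟨1, fun _ => y, fun _ => 1, fun _ => hy, fun _ => zero_le_one, ?_, ?_⟩
    · simp [Real.one_rpow]
    · simp
  have hCconv : PConvex p C := by
    rintro y₁ ⟨N₁, P₁, c₁, hP₁, hc₁, hs₁, hx₁⟩ y₂ ⟨N₂, P₂, c₂, hP₂, hc₂, hs₂, hx₂⟩
      a b ha hb hab
    refine ⟨N₁ + N₂, Fin.append P₁ P₂,
      Fin.append (fun i => a * c₁ i) (fun i => b * c₂ i), ?_, ?_, ?_, ?_⟩
    · intro i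
      refine Fin.addCases (fun j => ?_) (fun j => ?_) i
      · rw [Fin.append_left]; exact hP₁ j
      · rw [Fin.append_right]; exact hP₂ j
    · intro i
      refine Fin.addCases (fun j => ?_) (fun j => ?_) i
      · rw [Fin.append_left]; exact mul_nonneg ha (hc₁ j)
      · rw [Fin.append_right]; exact mul_nonneg hb (hc₂ j)
    · rw [Fin.sum_univ_add]
      simp only [Fin.append_left, Fin.append_right]
      rw [sum_congr rfl fun i _ => Real.mul_rpow ha (hc₁ i),
        sum_congr rfl fun i _ => Real.mul_rpow hb (hc₂ i),
        ← mul_sum, ← mul_sum, hs₁, hs₂, mul_one, mul_one, hab]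
    · rw [Fin.sum_univ_add]
      simp only [Fin.append_left, Fin.append_right]
      rw [sum_congr rfl fun (i : Fin N₁) _ => mul_smul a (c₁ i) (P₁ i),
        sum_congr rfl fun (i : Fin N₂) _ => mul_smul b (c₂ i) (P₂ i),
        ← smul_sum, ← smul_sum, hx₁, hx₂]
  have hsub : pConvHull p A ⊆ C :=
    Set.sInter_subset_of_mem (show C ∈ {S : Set X | PConvex p S ∧ A ⊆ S} from ⟨hCconv, hAC⟩)
  exact hsub hx
lemma exchange (hp0 : 0 < p) (hp1 : p < 1) {N : ℕ} (P : Fin N → X) (c μ : Fin N → ℝ)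
    (hc : ∀ i, 0 ≤ c i) (hsum : ∑ i, c i ^ p ≤ 1) (hμP : ∑ i, μ i • P i = 0)
    (hneg : ∃ i, μ i < 0) :
    ∃ c' : Fin N → ℝ, (∀ i, 0 ≤ c' i) ∧ (∑ i, c' i ^ p ≤ 1) ∧
      (∑ i, c' i • P i = ∑ i, c i • P i) ∧ ∃ j, c' j = 0 := by
  classical
  obtain ⟨i₀, hi₀⟩ := hneg
  have hT : (univ.filter fun i => μ i < 0).Nonempty := ⟨i₀, by simp [hi₀]⟩
  obtain ⟨j, hjmem, hjmin⟩ := Finset.exists_min_image _ (fun i => c i / (-μ i)) hT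
  rw [mem_filter] at hjmem
  have hμj : μ j < 0 := hjmem.2
  set t : ℝ := c j / (-μ j) with htdef
  have ht0 : 0 ≤ t := div_nonneg (hc j) (by linarith)
  set c' : Fin N → ℝ := fun i => c i + t * μ i with hc'def
  have hc'j : c' j = 0 := by
    have hne : μ j ≠ 0 := hμj.ne
    rw [hc'def]; simp only; rw [htdef, div_neg, neg_mul, div_mul_cancel₀ _ hne]
    ring
  have hc'0 : ∀ i, 0 ≤ c' i := by
    intro i
    rcases lt_or_ge (μ i) 0 with h | h
    · have hle : t ≤ c i / (-μ i) := hjmin i (by simp [h])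
      rw [le_div_iff₀ (by linarith : (0:ℝ) < -μ i)] at hle
      rw [hc'def]; simp only; nlinarith
    · rw [hc'def]; simp only; nlinarith [mul_nonneg ht0 h, hc i]
  have hc'P : ∑ i, c' i • P i = ∑ i, c i • P i := by
    have : ∑ i, c' i • P i = ∑ i, c i • P i + t • ∑ i, μ i • P i := by
      rw [smul_sum, ← sum_add_distrib]
      exact sum_congr rfl fun i _ => by
        rw [hc'def]; simp only; rw [add_smul, smul_smul]
    rw [this, hμP, smul_zero, add_zero]
  rcases le_or_gt (∑ i, c' i ^ p) 1 with hle | hgt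
  · exact ⟨c', hc'0, hle, hc'P, j, hc'j⟩
  -- second direction needed
  have htpos : 0 < t := by
    rcases ht0.lt_or_eq with h | h
    · exact h
    · exfalso
      have : ∀ i, c' i = c i := fun i => by rw [hc'def]; simp [← h]
      rw [sum_congr rfl fun i _ => by rw [this i]] at hgt
      linarith
  have hposμ : ∃ i, 0 < μ i := by
    by_contra h
    push_neg at h
    have : ∀ i, c' i ≤ c i := fun i => by
      rw [hc'def]; simp only; nlinarith [h i]
    have hmono : ∑ i, c' i ^ p ≤ ∑ i, c i ^ p :=
      sum_le_sum fun i _ => Real.rpow_le_rpow (hc'0 i) (this i) hp0.le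
    linarith
  obtain ⟨i₁, hi₁⟩ := hposμ
  have hT' : (univ.filter fun i => 0 < μ i).Nonempty := ⟨i₁, by simp [hi₁]⟩
  obtain ⟨j', hj'mem, hj'min⟩ := Finset.exists_min_image _ (fun i => c i / μ i) hT'
  rw [mem_filter] at hj'mem
  have hμj' : 0 < μ j' := hj'mem.2
  set t' : ℝ := c j' / μ j' with ht'def
  have ht'0 : 0 ≤ t' := div_nonneg (hc j') hμj'.le
  set c'' : Fin N → ℝ := fun i => c i - t' * μ i with hc''def
  have hc''j : c'' j' = 0 := by
    have hne : μ j' ≠ 0 := hμj'.ne'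
    rw [hc''def]; simp only; rw [ht'def, div_mul_cancel₀ _ hne, sub_self]
  have hc''0 : ∀ i, 0 ≤ c'' i := by
    intro i
    rcases lt_or_ge 0 (μ i) with h | h
    · have hle : t' ≤ c i / μ i := hj'min i (by simp [h])
      rw [le_div_iff₀ h] at hle
      rw [hc''def]; simp only; nlinarith
    · rw [hc''def]; simp only; nlinarith [mul_nonneg ht'0 (neg_nonneg.2 h), hc i]
  have hc''P : ∑ i, c'' i • P i = ∑ i, c i • P i := by
    have : ∑ i, c'' i • P i = ∑ i, c i • P i - t' • ∑ i, μ i • P i := by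
      rw [smul_sum, ← sum_sub_distrib]
      exact sum_congr rfl fun i _ => by
        rw [hc''def]; simp only; rw [sub_smul, smul_smul]
    rw [this, hμP, smul_zero, sub_zero]
  -- concavity argument
  set lam : ℝ := t / (t + t') with hlamdef
  have htt : 0 < t + t' := by linarith
  have hlam0 : 0 < lam := div_pos htpos htt
  have hlam1 : lam ≤ 1 := by rw [div_le_one htt]; linarith
  have hkey : ∀ i, lam * c'' i + (1 - lam) * c' i = c i := by
    intro i
    rw [hc''def, hc'def, hlamdef]; simp only
    field_simp
    ring
  have hconc := Real.concaveOn_rpow hp0.le hp1.le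
  have hper : ∀ i, lam * c'' i ^ p + (1 - lam) * c' i ^ p ≤ c i ^ p := by
    intro i
    have h := hconc.2 (Set.mem_Ici.mpr (hc''0 i)) (Set.mem_Ici.mpr (hc'0 i))
      hlam0.le (by linarith : (0:ℝ) ≤ 1 - lam) (by ring)
    simp only [smul_eq_mul] at h
    rw [hkey i] at h
    exact h
  have hsum2 : lam * (∑ i, c'' i ^ p) + (1 - lam) * (∑ i, c' i ^ p) ≤ 1 := by
    rw [mul_sum, mul_sum, ← sum_add_distrib]
    exact le_trans (sum_le_sum fun i _ => hper i) hsum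
  have hfinal : ∑ i, c'' i ^ p ≤ 1 := by
    nlinarith [hgt, hlam0, hlam1, hsum2]
  exact ⟨c'', hc''0, hfinal, hc''P, j', hc''j⟩
end aux
lemma reduce (p : ℝ) (hp0 : 0 < p) (hp1 : p < 1) (n : ℕ) :
    ∀ (N : ℕ) (P : Fin N → (Fin n → ℝ)) (c : Fin N → ℝ),
    (∀ i, 0 ≤ c i) → (∑ i, c i ^ p ≤ 1) →
    ∃ (k : ℕ), k ≤ n ∧ ∃ (Q : Fin k → (Fin n → ℝ)) (d : Fin k → ℝ),
      (∀ i, ∃ j, Q i = P j) ∧ LinearIndependent ℝ Q ∧ (∀ i, 0 ≤ d i) ∧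
      (∑ i, d i ^ p ≤ 1) ∧ ∑ i, d i • Q i = ∑ i, c i • P i := by
  intro N
  induction N with
  | zero =>
    intro P c _ _
    exact ⟨0, Nat.zero_le n, Fin.elim0, Fin.elim0, fun i => i.elim0,
      linearIndependent_empty_type, fun i => i.elim0, by simp, by simp⟩
  | succ N ih =>
    intro P c hc hsum
    have key : ∀ c' : Fin (N+1) → ℝ, (∀ i, 0 ≤ c' i) → (∑ i, c' i ^ p ≤ 1) →
        (∑ i, c' i • P i = ∑ i, c i • P i) → (∃ j, c' j = 0) →
        ∃ (k : ℕ), k ≤ n ∧ ∃ (Q : Fin k → (Fin n → ℝ)) (d : Fin k → ℝ),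
          (∀ i, ∃ j, Q i = P j) ∧ LinearIndependent ℝ Q ∧ (∀ i, 0 ≤ d i) ∧
          (∑ i, d i ^ p ≤ 1) ∧ ∑ i, d i • Q i = ∑ i, c i • P i := by
      rintro c' hc'0 hc'sum hc'P ⟨j, hj⟩
      obtain ⟨k, hk, Q, d, hQ, hli, hd, hdsum, hdP⟩ :=
        ih (fun i => P (j.succAbove i)) (fun i => c' (j.succAbove i))
          (fun i => hc'0 _)
          (by
            have h := Fin.sum_univ_succAbove (fun i => c' i ^ p) j
            rw [hj, Real.zero_rpow hp0.ne', zero_add] at h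
            rw [← h]
            exact hc'sum)
      refine ⟨k, hk, Q, d, fun i => ?_, hli, hd, hdsum, ?_⟩
      · obtain ⟨j', hj'⟩ := hQ i; exact ⟨j.succAbove j', hj'⟩
      · rw [hdP, ← hc'P, Fin.sum_univ_succAbove (fun i => c' i • P i) j, hj,
          zero_smul, zero_add]
    by_cases hz : ∃ j, c j = 0
    · exact key c hc hsum rfl hz
    · by_cases hli : LinearIndependent ℝ P
      · refine ⟨N+1, ?_, P, c, fun i => ⟨i, rfl⟩, hli, hc, hsum, rfl⟩
        have h1 := hli.fintype_card_le_finrank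
        simpa [Module.finrank_fin_fun] using h1
      · obtain ⟨μ, hμsum, j₀, hμj₀⟩ := Fintype.not_linearIndependent_iff.1 hli
        have hex : ∃ c' : Fin (N+1) → ℝ, (∀ i, 0 ≤ c' i) ∧ (∑ i, c' i ^ p ≤ 1) ∧
            (∑ i, c' i • P i = ∑ i, c i • P i) ∧ ∃ j, c' j = 0 := by
          rcases lt_trichotomy (μ j₀) 0 with h | h | h
          · exact exchange hp0 hp1 P c μ hc hsum hμsum ⟨j₀, h⟩
          · exact absurd h hμj₀
          · refine exchange hp0 hp1 P c (fun i => -μ i) hc hsum ?_ ⟨j₀, show -μ j₀ < 0 by linarith⟩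
            simp only [neg_smul]
            rw [Finset.sum_neg_distrib, hμsum, neg_zero]
        obtain ⟨c', h1, h2, h3, h4⟩ := hex
        exact key c' h1 h2 h3 h4

theorem caratheodory_pconv (p : ℝ) (hp0 : 0 < p) (hp1 : p < 1) (n : ℕ)
    (A : Set (Fin n → ℝ)) (x : Fin n → ℝ)
    (hx : x ∈ pConvHull p A) (hx0 : x ≠ 0) :
    ∃ (k : ℕ) (_ : k ≤ n) (P : Fin k → (Fin n → ℝ)),
      (∀ i, P i ∈ A) ∧ LinearIndependent ℝ P ∧
      x ∈ pConvHull p (Set.range P) := by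
  obtain ⟨N, P, c, hPA, hc, hsum, hPx⟩ := exists_rep hp0 hx
  obtain ⟨k, hk, Q, d, hQ, hli, hd, hdsum, hdx⟩ := reduce p hp0 hp1 n N P c hc hsum.le
  rw [hPx] at hdx
  refine ⟨k, hk, Q, fun i => by obtain ⟨j, hj⟩ := hQ i; rw [hj]; exact hPA j, hli, ?_⟩
  set s := ∑ i, d i ^ p with hsdef
  have hs0 : 0 ≤ s := sum_nonneg fun i _ => Real.rpow_nonneg (hd _) _
  have hspos : 0 < s := by
    rcases hs0.lt_or_eq with h | h
    · exact h
    · exfalso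
      have hz : ∀ i, d i = 0 := by
        intro i
        have hterm := (sum_eq_zero_iff_of_nonneg
          (fun i _ => Real.rpow_nonneg (hd _) _)).1 h.symm i (mem_univ i)
        by_contra hne
        exact absurd hterm
          (ne_of_gt (Real.rpow_pos_of_pos (lt_of_le_of_ne (hd _) (Ne.symm hne)) p))
      apply hx0
      rw [← hdx]
      exact sum_eq_zero fun i _ => by rw [hz i, zero_smul]
  set r := s ^ (1/p) with hrdef
  have hr0 : 0 < r := Real.rpow_pos_of_pos hspos _
  have hr1 : r ≤ 1 := Real.rpow_le_one hs0 hdsum (by positivity)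
  have hrp : r ^ p = s := by
    rw [hrdef, ← Real.rpow_mul hs0, one_div_mul_cancel hp0.ne', Real.rpow_one]
  have hmem : ∑ i, (d i / r) • Q i ∈ pConvHull p (Set.range Q) :=
    rep_mem_pConvHull hp0 k Q _ (fun i => Set.mem_range_self i)
      (fun i => div_nonneg (hd i) hr0.le)
      (by
        rw [sum_congr rfl fun i _ => Real.div_rpow (hd i) hr0.le p, ← sum_div, hrp,
          ← hsdef, div_self hspos.ne'])
  have hxr : r • ∑ i, (d i / r) • Q i = x := by
    rw [smul_sum, ← hdx]
    exact sum_congr rfl fun i _ => by rw [smul_smul, mul_comm, div_mul_cancel₀ _ hr0.ne']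
  rw [← hxr]
  exact smul_mem_pconvex hp0 hp1 pConvex_pConvHull hmem hr0 hr1
end

section
/- Let 0<p<1 and A ⊆ R^n. If 0 ∈ p-conv(A), then there exist points P_1,...,P_k ∈ A with k ≤ n+1 such that 0 ∈ p-conv({P_1,...,P_k}). -/
open Finset

/-!
The coefficients of a p-convex combination are not all zero, so up to rescaling, `0` lies in the
p-convex hull of `A` exactly when it is a nontrivial nonnegative combination of points of `A`,
i.e. when `0 ∈ convexHull ℝ A`: one direction because every convex cone is p-convex, the other
by normalising the weights so that their `p`-th powers sum to `1`. Carathéodory's theorem then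
cuts `A` down to at most `n + 1` affinely independent points.
-/

section

variable {X : Type*} [AddCommGroup X] [Module ℝ X] {p : ℝ}

lemma sum_rpow_div_sum_rpow_rpow_inv {ι : Type*} (hp : p ≠ 0) {s : Finset ι} {w : ι → ℝ}
    (hw : ∀ i ∈ s, 0 ≤ w i) (hpos : 0 < ∑ i ∈ s, w i ^ p) :
    ∑ i ∈ s, (w i / (∑ j ∈ s, w j ^ p) ^ p⁻¹) ^ p = 1 := by
  have hT : 0 ≤ (∑ j ∈ s, w j ^ p) ^ p⁻¹ := Real.rpow_nonneg hpos.le _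
  simp_rw [sum_congr rfl fun i hi => Real.div_rpow (hw i hi) hT p,
    Real.rpow_inv_rpow hpos.le hp, ← sum_div, div_self hpos.ne']

lemma PConvex.sum_smul_mem (hp : p ≠ 0) {S : Set X} (hS : PConvex p S) {ι : Type*}
    (s : Finset ι) {v : ι → X} {l : ι → ℝ} (hv : ∀ i ∈ s, v i ∈ S) (hl : ∀ i ∈ s, 0 ≤ l i)
    (hsum : ∑ i ∈ s, l i ^ p = 1) :
    ∑ i ∈ s, l i • v i ∈ S := by
  induction s using Finset.cons_induction generalizing l with
  | empty => simp at hsum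
  | cons a s ha ih =>
    rw [sum_cons] at hsum ⊢
    have hva := hv a (mem_cons_self a s)
    have hla := hl a (mem_cons_self a s)
    replace hv : ∀ i ∈ s, v i ∈ S := fun i hi => hv i (mem_cons_of_mem hi)
    replace hl : ∀ i ∈ s, 0 ≤ l i := fun i hi => hl i (mem_cons_of_mem hi)
    rcases (sum_nonneg fun i hi => Real.rpow_nonneg (hl i hi) p).eq_or_lt with hr | hr
    · have hzero : ∑ i ∈ s, l i • v i = 0 := sum_eq_zero fun i hi => by
        rw [(Real.rpow_eq_zero (hl i hi) hp).1 <|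
          (sum_eq_zero_iff_of_nonneg fun j hj => Real.rpow_nonneg (hl j hj) p).1 hr.symm i hi,
          zero_smul]
      have := hS _ hva _ hva (l a) 0 hla le_rfl (by rwa [Real.zero_rpow hp, hr])
      rwa [hzero, ← zero_smul ℝ (v a)]
    · set T := (∑ i ∈ s, l i ^ p) ^ p⁻¹
      have hT : 0 < T := Real.rpow_pos_of_pos hr _
      have hy := ih hv (fun i hi => div_nonneg (hl i hi) hT.le)
        (sum_rpow_div_sum_rpow_rpow_inv hp hl hr)
      have := hS _ hva _ hy (l a) T hla hT.le (by rwa [Real.rpow_inv_rpow hr.le hp])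
      rwa [smul_sum, sum_congr rfl fun i _ => by rw [smul_smul, mul_div_cancel₀ _ hT.ne']]
        at this

lemma ConvexCone.pConvex (hp : p ≠ 0) (C : ConvexCone ℝ X) : PConvex p (C : Set X) := by
  intro x hx y hy a b ha hb hab
  rcases ha.eq_or_lt with rfl | ha
  · rw [Real.zero_rpow hp, zero_add] at hab
    have hb : 0 < b := hb.lt_of_ne (by rintro rfl; simp [Real.zero_rpow hp] at hab)
    simpa using C.smul_mem hb hy
  rcases hb.eq_or_lt with rfl | hb
  · simpa using C.smul_mem ha hx
  exact C.add_mem (C.smul_mem ha hx) (C.smul_mem hb hy)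

lemma pConvHull_min {A S : Set X} (hS : PConvex p S) (hAS : A ⊆ S) : pConvHull p A ⊆ S :=
  Set.sInter_subset_of_mem ⟨hS, hAS⟩

lemma PConvex.zero_mem_of_zero_mem_convexHull (hp : p ≠ 0) {A S : Set X} (hS : PConvex p S)
    (hAS : A ⊆ S) (h : (0 : X) ∈ convexHull ℝ A) : (0 : X) ∈ S := by
  obtain ⟨ι, _, w, z, hw, hw1, hzA, hwz⟩ := mem_convexHull_iff_exists_fintype.1 h
  have hpos : 0 < ∑ i, w i ^ p := by
    obtain ⟨i, -, hi⟩ := exists_lt_of_sum_lt (s := univ) (f := 0) (g := w) (by simp [hw1])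
    exact sum_pos' (fun i _ => Real.rpow_nonneg (hw i) p) ⟨i, mem_univ i, Real.rpow_pos_of_pos hi p⟩
  have := hS.sum_smul_mem hp univ (fun i _ => hAS (hzA i))
    (fun i _ => div_nonneg (hw i) (Real.rpow_nonneg hpos.le _))
    (sum_rpow_div_sum_rpow_rpow_inv hp (fun i _ => hw i) hpos)
  simpa only [div_eq_inv_mul, ← smul_smul, ← smul_sum, hwz, smul_zero] using this

theorem zero_mem_pConvHull_iff (hp : p ≠ 0) {A : Set X} :
    (0 : X) ∈ pConvHull p A ↔ (0 : X) ∈ convexHull ℝ A := by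
  refine ⟨fun h => ?_, fun h => Set.mem_sInter.2 fun S hS =>
    hS.1.zero_mem_of_zero_mem_convexHull hp hS.2 h⟩
  obtain ⟨r, hr, h0⟩ := (ConvexCone.mem_hull_of_convex (convex_convexHull ℝ A)).1 <|
    pConvHull_min (ConvexCone.pConvex hp _) ((subset_convexHull ℝ A).trans ConvexCone.subset_hull) h
  exact (Set.zero_mem_smul_set_iff hr.ne').1 h0

end

theorem caratheodory_pconv_zero_general (p : ℝ) (hp0 : 0 < p) (n : ℕ)
    (A : Set (Fin n → ℝ)) (h0 : (0 : Fin n → ℝ) ∈ pConvHull p A) :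
    ∃ (k : ℕ) (_ : k ≤ n + 1) (P : Fin k → (Fin n → ℝ)),
      (∀ i, P i ∈ A) ∧ (0 : Fin n → ℝ) ∈ pConvHull p (Set.range P) := by
  rw [zero_mem_pConvHull_iff hp0.ne', convexHull_eq_union] at h0
  simp only [Set.mem_iUnion] at h0
  obtain ⟨t, htA, ht, h0t⟩ := h0
  refine ⟨t.card, ?_, (↑) ∘ t.equivFin.symm, fun i => htA (t.equivFin.symm i).2, ?_⟩
  · calc t.card = Fintype.card t := (Fintype.card_coe t).symm
      _ ≤ Module.finrank ℝ (vectorSpan ℝ (Set.range ((↑) : t → Fin n → ℝ))) + 1 :=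
        ht.card_le_finrank_succ
      _ ≤ n + 1 := by
        simpa using Submodule.finrank_le (vectorSpan ℝ (Set.range ((↑) : t → Fin n → ℝ)))
  · rwa [Set.range_comp, t.equivFin.symm.range_eq_univ, Set.image_univ, Subtype.range_coe,
      zero_mem_pConvHull_iff hp0.ne']

theorem caratheodory_pconv_zero (p : ℝ) (hp0 : 0 < p) (hp1 : p < 1) (n : ℕ)
    (A : Set (Fin n → ℝ)) (h0 : (0 : Fin n → ℝ) ∈ pConvHull p A) :
    ∃ (k : ℕ) (_ : k ≤ n + 1) (P : Fin k → (Fin n → ℝ)),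
      (∀ i, P i ∈ A) ∧ (0 : Fin n → ℝ) ∈ pConvHull p (Set.range P) :=
  caratheodory_pconv_zero_general p hp0 n A h0
end
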